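/- Let X ⊂ ℝ^d be finite, let f : ℝ^d → ℝ^m be a JLT on X ∪ (X − X) in the sense that |‖f(u) − f(v)‖² − ‖u − v‖²| ≤ ε‖u − v‖² for all u, v ∈ X, with ε ∈ (0,1). For any partition X_1, …, X_k of X, the k-means cost of the partition computed from the embedded points {f(x) : x ∈ X_i} (with centers at partition means) lies within a multiplicative factor [1 − ε, 1 + ε] of the k-means cost of the partition X_1, …, X_k in ℝ^d. -/

import Mathlib

/-!
The k-means cost of a cluster equals `(2 |S|)⁻¹ ∑_{x,y ∈ S} ‖x - y‖²`, a nonnegative combination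
of pairwise squared distances only, so pairwise bounds `(1 - ε) ‖x - y‖² ≤ ‖f x - f y‖² ≤ (1 + ε) ‖x - y‖²`
pass to the cost of each cluster and, summing, to the cost of the partition.
-/

open Finset

section ClusterCost

variable {α E : Type*} [NormedAddCommGroup E] [InnerProductSpace ℝ E]

theorem Finset.sum_norm_sub_sq (S : Finset α) (g : α → E) (v : E) :
    ∑ y ∈ S, ‖g y - v‖ ^ 2
      = ∑ y ∈ S, ‖g y‖ ^ 2 - 2 * inner ℝ (∑ y ∈ S, g y) v + #S * ‖v‖ ^ 2 := by
  simp only [norm_sub_sq_real, sum_add_distrib, sum_sub_distrib, ← mul_sum, sum_inner,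
    sum_const, nsmul_eq_mul]

noncomputable def clusterCost (S : Finset α) (g : α → E) : ℝ :=
  ∑ x ∈ S, ‖g x - (#S : ℝ)⁻¹ • ∑ y ∈ S, g y‖ ^ 2

theorem clusterCost_eq_sum_sum_norm_sub_sq (S : Finset α) (g : α → E) :
    clusterCost S g = (2 * #S : ℝ)⁻¹ * ∑ x ∈ S, ∑ y ∈ S, ‖g x - g y‖ ^ 2 := by
  rcases S.eq_empty_or_nonempty with rfl | hS
  · simp [clusterCost]
  have hn : (#S : ℝ) ≠ 0 := by exact_mod_cast hS.card_pos.ne'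
  set s := ∑ y ∈ S, g y
  have hpairs : ∑ x ∈ S, ∑ y ∈ S, ‖g x - g y‖ ^ 2
      = 2 * #S * ∑ y ∈ S, ‖g y‖ ^ 2 - 2 * ‖s‖ ^ 2 := by
    rw [sum_comm]
    simp_rw [sum_norm_sub_sq, sum_add_distrib, sum_sub_distrib, ← mul_sum,
      ← inner_sum, real_inner_self_eq_norm_sq, sum_const, nsmul_eq_mul]
    ring
  rw [clusterCost, sum_norm_sub_sq, hpairs, inner_smul_right, real_inner_self_eq_norm_sq,
    norm_smul, Real.norm_eq_abs, abs_inv, Nat.abs_cast]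
  field_simp
  ring

theorem mul_clusterCost_le_mul_clusterCost {F : Type*} [NormedAddCommGroup F]
    [InnerProductSpace ℝ F] {S : Finset α} {g : α → E} {h : α → F} {a b : ℝ}
    (hab : ∀ x ∈ S, ∀ y ∈ S, a * ‖g x - g y‖ ^ 2 ≤ b * ‖h x - h y‖ ^ 2) :
    a * clusterCost S g ≤ b * clusterCost S h := by
  simp only [clusterCost_eq_sum_sum_norm_sub_sq, mul_left_comm a, mul_left_comm b, mul_sum]
  gcongr ∑ x ∈ S, ∑ y ∈ S, (2 * #S : ℝ)⁻¹ * ?_ with x hx y hy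
  exact hab x hx y hy

end ClusterCost

theorem jlt_preserves_kmeans_cost_general (d m k : ℕ) (ε : ℝ)
    (X : Finset (EuclideanSpace ℝ (Fin d)))
    (f : EuclideanSpace ℝ (Fin d) →ₗ[ℝ] EuclideanSpace ℝ (Fin m))
    (hf : ∀ u ∈ X, ∀ v ∈ X, |‖f u - f v‖ ^ 2 - ‖u - v‖ ^ 2| ≤ ε * ‖u - v‖ ^ 2)
    (P : Fin k → Finset (EuclideanSpace ℝ (Fin d)))
    (hPsub : ∀ i, P i ⊆ X) :
    (1 - ε) * (∑ i, ∑ x ∈ P i, ‖x - ((P i).card : ℝ)⁻¹ • ∑ y ∈ P i, y‖ ^ 2)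
        ≤ (∑ i, ∑ x ∈ P i, ‖f x - ((P i).card : ℝ)⁻¹ • ∑ y ∈ P i, f y‖ ^ 2)
      ∧ (∑ i, ∑ x ∈ P i, ‖f x - ((P i).card : ℝ)⁻¹ • ∑ y ∈ P i, f y‖ ^ 2)
        ≤ (1 + ε) * (∑ i, ∑ x ∈ P i, ‖x - ((P i).card : ℝ)⁻¹ • ∑ y ∈ P i, y‖ ^ 2) := by
  have hpair : ∀ i, ∀ x ∈ P i, ∀ y ∈ P i,
      (1 - ε) * ‖x - y‖ ^ 2 ≤ 1 * ‖f x - f y‖ ^ 2 ∧ 1 * ‖f x - f y‖ ^ 2 ≤ (1 + ε) * ‖x - y‖ ^ 2 := by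
    intro i x hx y hy
    have := abs_le.mp (hf x (hPsub i hx) y (hPsub i hy))
    constructor <;> linarith [this.1, this.2]
  have hcluster (i : Fin k) :
      (1 - ε) * clusterCost (P i) id ≤ 1 * clusterCost (P i) f
        ∧ 1 * clusterCost (P i) f ≤ (1 + ε) * clusterCost (P i) id :=
    ⟨mul_clusterCost_le_mul_clusterCost fun x hx y hy => (hpair i x hx y hy).1,
      mul_clusterCost_le_mul_clusterCost fun x hx y hy => (hpair i x hx y hy).2⟩
  simp only [one_mul] at hcluster
  rw [mul_sum, mul_sum]
  exact ⟨sum_le_sum fun i _ => (hcluster i).1, sum_le_sum fun i _ => (hcluster i).2⟩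

theorem jlt_preserves_kmeans_cost (d m k : ℕ) (ε : ℝ) (hε : ε ∈ Set.Ioo (0:ℝ) 1)
    (X : Finset (EuclideanSpace ℝ (Fin d)))
    (f : EuclideanSpace ℝ (Fin d) →ₗ[ℝ] EuclideanSpace ℝ (Fin m))
    (hf : ∀ u ∈ X, ∀ v ∈ X, |‖f u - f v‖ ^ 2 - ‖u - v‖ ^ 2| ≤ ε * ‖u - v‖ ^ 2)
    (P : Fin k → Finset (EuclideanSpace ℝ (Fin d)))
    (hPsub : ∀ i, P i ⊆ X) (hPne : ∀ i, (P i).Nonempty)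
    (hPdisj : ∀ i j, i ≠ j → Disjoint (P i) (P j))
    (hPcover : ∀ x ∈ X, ∃ i, x ∈ P i) :
    (1 - ε) * (∑ i, ∑ x ∈ P i, ‖x - ((P i).card : ℝ)⁻¹ • ∑ y ∈ P i, y‖ ^ 2)
        ≤ (∑ i, ∑ x ∈ P i, ‖f x - ((P i).card : ℝ)⁻¹ • ∑ y ∈ P i, f y‖ ^ 2)
      ∧ (∑ i, ∑ x ∈ P i, ‖f x - ((P i).card : ℝ)⁻¹ • ∑ y ∈ P i, f y‖ ^ 2)
        ≤ (1 + ε) * (∑ i, ∑ x ∈ P i, ‖x - ((P i).card : ℝ)⁻¹ • ∑ y ∈ P i, y‖ ^ 2) :=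
  jlt_preserves_kmeans_cost_general d m k ε X f hf P hPsub
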